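/- Let g be a metric on an open set Ω ⊆ ℝ^m, let u be a smooth unit timelike covector field (Σ_{i,j} g^{ij} u_i u_j = −1) satisfying ∇_i u_j = φ (u_i u_j + g_{ij}) − u_i A_j, where φ : Ω → ℝ is smooth and A_j := Σ_{i,k} g^{ik} u_k ∇_i u_j is the acceleration. Let S : Ω → ℝ be smooth and positive with Σ_{i,j} g^{ij} u_i ∂_j S = φ S. Then the covector field τ_i := S u_i satisfies ∇_i τ_j = κ g_{ij} + α_i τ_j + τ_i β_j with κ = φ S, α_i = (∂_i S)/S + φ u_i, β_j = −A_j, and moreover Σ_{i,j} g^{ij} α_i τ_j = 0 and Σ_{i,j} g^{ij} β_i τ_j = 0; that is, τ is a doubly torqued vector field for g. -/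

import Mathlib

open scoped BigOperators

noncomputable def pd {m : ℕ} (i : Fin m) (f : (Fin m → ℝ) → ℝ) (x : Fin m → ℝ) : ℝ :=
  fderiv ℝ f x (Pi.single i 1)

private lemma pd_congr {m : ℕ} {p : Fin m} {f h : (Fin m → ℝ) → ℝ} {x : Fin m → ℝ}
    (hfh : f =ᶠ[nhds x] h) : pd p f x = pd p h x := by
  unfold pd; rw [hfh.fderiv_eq]

private lemma pd_const {m : ℕ} (p : Fin m) (c : ℝ) (x : Fin m → ℝ) :
    pd p (fun _ => c) x = 0 := by
  unfold pd; rw [fderiv_fun_const]; simp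

private lemma pd_sum {m : ℕ} {ι : Type*} (p : Fin m) (s : Finset ι)
    (f : ι → (Fin m → ℝ) → ℝ) {x : Fin m → ℝ}
    (hf : ∀ i ∈ s, DifferentiableAt ℝ (f i) x) :
    pd p (fun y => ∑ i ∈ s, f i y) x = ∑ i ∈ s, pd p (f i) x := by
  unfold pd; rw [fderiv_fun_sum hf]; simp

private lemma pd_mul {m : ℕ} (p : Fin m) {f h : (Fin m → ℝ) → ℝ} {x : Fin m → ℝ}
    (hf : DifferentiableAt ℝ f x) (hh : DifferentiableAt ℝ h x) :
    pd p (fun y => f y * h y) x = pd p f x * h x + f x * pd p h x := by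
  unfold pd; rw [fderiv_fun_mul hf hh]; simp; ring

private lemma pd_mul3 {m : ℕ} (p : Fin m) {f h k : (Fin m → ℝ) → ℝ} {x : Fin m → ℝ}
    (hf : DifferentiableAt ℝ f x) (hh : DifferentiableAt ℝ h x) (hk : DifferentiableAt ℝ k x) :
    pd p (fun y => f y * h y * k y) x
      = pd p f x * h x * k x + f x * pd p h x * k x + f x * h x * pd p k x := by
  rw [pd_mul p (f := fun y => f y * h y) (hf.mul hh) hk, pd_mul p hf hh]; ring

private lemma diffAt_prod {E : Type*} [NormedAddCommGroup E] [NormedSpace ℝ E]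
    {ι : Type*} (s : Finset ι) (f : ι → E → ℝ) {x : E}
    (h : ∀ i ∈ s, DifferentiableAt ℝ (f i) x) :
    DifferentiableAt ℝ (fun y => ∏ i ∈ s, f i y) x := by
  classical
  induction s using Finset.induction_on with
  | empty => simpa using differentiableAt_const (1:ℝ)
  | insert _ _ ha ih =>
      simp only [Finset.prod_insert ha]
      exact (h _ (Finset.mem_insert_self _ _)).mul (ih fun i hi => h i (Finset.mem_insert_of_mem hi))

private lemma diffAt_det {m : ℕ} {M : (Fin m → ℝ) → Matrix (Fin m) (Fin m) ℝ} {x : Fin m → ℝ}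
    (h : ∀ a b, DifferentiableAt ℝ (fun y => M y a b) x) :
    DifferentiableAt ℝ (fun y => (M y).det) x := by
  simp only [Matrix.det_apply']
  exact DifferentiableAt.fun_sum fun σ _ =>
    (diffAt_prod Finset.univ (fun i y => M y (σ i) i) (fun i _ => h (σ i) i)).const_mul _

private lemma inv_entry_eq {m : ℕ} (M : Matrix (Fin m) (Fin m) ℝ) (a b : Fin m) :
    M⁻¹ a b = (M.det)⁻¹ * M.adjugate a b := by
  rw [Matrix.inv_def, Ring.inverse_eq_inv']
  simp [Matrix.smul_apply]

private lemma diffAt_adjugate {m : ℕ} {M : (Fin m → ℝ) → Matrix (Fin m) (Fin m) ℝ}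
    {x : Fin m → ℝ} (h : ∀ a b, DifferentiableAt ℝ (fun y => M y a b) x) (a b : Fin m) :
    DifferentiableAt ℝ (fun y => (M y).adjugate a b) x := by
  simp only [Matrix.adjugate_apply]
  refine diffAt_det fun i j => ?_
  simp only [Matrix.updateRow_apply]
  by_cases hib : i = b
  · simp [hib]
  · simpa [hib] using h i j

private lemma diffAt_inv_entry {m : ℕ} {M : (Fin m → ℝ) → Matrix (Fin m) (Fin m) ℝ}
    {x : Fin m → ℝ} (h : ∀ a b, DifferentiableAt ℝ (fun y => M y a b) x)
    (hdet : (M x).det ≠ 0) (a b : Fin m) :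
    DifferentiableAt ℝ (fun y => (M y)⁻¹ a b) x := by
  simp only [inv_entry_eq]
  exact ((diffAt_det h).inv hdet).mul (diffAt_adjugate h a b)

noncomputable def Christoffel {m : ℕ} (g : (Fin m → ℝ) → Matrix (Fin m) (Fin m) ℝ)
    (k i j : Fin m) (x : Fin m → ℝ) : ℝ :=
  (1 / 2) * ∑ l, (g x)⁻¹ k l *
    (pd i (fun y => g y l j) x + pd j (fun y => g y l i) x - pd l (fun y => g y i j) x)

noncomputable def covDeriv {m : ℕ} (g : (Fin m → ℝ) → Matrix (Fin m) (Fin m) ℝ)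
    (τ : (Fin m → ℝ) → Fin m → ℝ) (i j : Fin m) (x : Fin m → ℝ) : ℝ :=
  pd i (fun y => τ y j) x - ∑ k, Christoffel g k i j x * τ x k

def IsMetricOn {m : ℕ} (g : (Fin m → ℝ) → Matrix (Fin m) (Fin m) ℝ)
    (Ω : Set (Fin m → ℝ)) : Prop :=
  (∀ i j, ContDiffOn ℝ (⊤ : ℕ∞) (fun x => g x i j) Ω) ∧
  (∀ x ∈ Ω, (g x).IsSymm) ∧ (∀ x ∈ Ω, IsUnit (g x).det)

private lemma inv_symm {m : ℕ} {M : Matrix (Fin m) (Fin m) ℝ}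
    (hsymm : M.IsSymm) (a b : Fin m) : M⁻¹ a b = M⁻¹ b a := by
  have h1 : (M⁻¹).transpose = M⁻¹ := by
    rw [Matrix.transpose_nonsing_inv, hsymm.eq]
  have := congrFun (congrFun h1 b) a
  simpa [Matrix.transpose_apply] using this

private lemma sum_contract {m : ℕ} (M : Matrix (Fin m) (Fin m) ℝ) (v w : Fin m → ℝ)
    (P : Fin m → Fin m → ℝ) :
    ∑ i, ∑ j, (∑ c, ∑ d, M i c * P c d * M d j) * v i * w j
      = ∑ c, ∑ d, (∑ i, M i c * v i) * P c d * (∑ j, M d j * w j) := by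
  calc ∑ i, ∑ j, (∑ c, ∑ d, M i c * P c d * M d j) * v i * w j
      = ∑ i, ∑ j, ∑ c, ∑ d, M i c * P c d * M d j * v i * w j := by
        refine Finset.sum_congr rfl fun i _ => Finset.sum_congr rfl fun j _ => ?_
        rw [Finset.sum_mul, Finset.sum_mul]
        refine Finset.sum_congr rfl fun c _ => ?_
        rw [Finset.sum_mul, Finset.sum_mul]
    _ = ∑ i, ∑ c, ∑ j, ∑ d, M i c * P c d * M d j * v i * w j :=
        Finset.sum_congr rfl fun i _ => Finset.sum_comm
    _ = ∑ c, ∑ i, ∑ j, ∑ d, M i c * P c d * M d j * v i * w j := Finset.sum_comm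
    _ = ∑ c, ∑ i, ∑ d, ∑ j, M i c * P c d * M d j * v i * w j :=
        Finset.sum_congr rfl fun c _ => Finset.sum_congr rfl fun i _ => Finset.sum_comm
    _ = ∑ c, ∑ d, ∑ i, ∑ j, M i c * P c d * M d j * v i * w j :=
        Finset.sum_congr rfl fun c _ => Finset.sum_comm
    _ = ∑ c, ∑ d, (∑ i, M i c * v i) * P c d * (∑ j, M d j * w j) := by
        refine Finset.sum_congr rfl fun c _ => Finset.sum_congr rfl fun d _ => ?_
        rw [Finset.sum_mul, Finset.sum_mul]
        refine Finset.sum_congr rfl fun i _ => ?_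
        rw [Finset.mul_sum]
        exact Finset.sum_congr rfl fun j _ => by ring
/-- from a unit timelike shear- and vorticity-free vector `u` and a
positive `S` with `u^j ∂_j S = φ S`, the vector `τ_i = S u_i` is doubly torqued. -/
theorem unit_vector_gives_doubly_torqued
    {m : ℕ} (Ω : Set (Fin m → ℝ)) (hΩ : IsOpen Ω)
    (g : (Fin m → ℝ) → Matrix (Fin m) (Fin m) ℝ) (hg : IsMetricOn g Ω)
    (u : (Fin m → ℝ) → Fin m → ℝ) (hu : ∀ j, ContDiffOn ℝ (⊤ : ℕ∞) (fun x => u x j) Ω)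
    (hunit : ∀ x ∈ Ω, ∑ i, ∑ j, (g x)⁻¹ i j * u x i * u x j = -1)
    (φ : (Fin m → ℝ) → ℝ) (hφ : ContDiffOn ℝ (⊤ : ℕ∞) φ Ω)
    (A : (Fin m → ℝ) → Fin m → ℝ)
    (hA : ∀ x, ∀ j, A x j = ∑ i, ∑ k, (g x)⁻¹ i k * u x k * covDeriv g u i j x)
    (hueq : ∀ x ∈ Ω, ∀ i j : Fin m,
      covDeriv g u i j x = φ x * (u x i * u x j + g x i j) - u x i * A x j)
    (S : (Fin m → ℝ) → ℝ) (hS : ContDiffOn ℝ (⊤ : ℕ∞) S Ω) (hSpos : ∀ x ∈ Ω, 0 < S x)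
    (hSeq : ∀ x ∈ Ω, ∑ i, ∑ j, (g x)⁻¹ i j * u x i * pd j S x = φ x * S x)
    (τ : (Fin m → ℝ) → Fin m → ℝ) (hτ : ∀ x i, τ x i = S x * u x i)
    (κ : (Fin m → ℝ) → ℝ) (hκ : ∀ x, κ x = φ x * S x)
    (α : (Fin m → ℝ) → Fin m → ℝ) (hα : ∀ x i, α x i = pd i S x / S x + φ x * u x i)
    (β : (Fin m → ℝ) → Fin m → ℝ) (hβ : ∀ x j, β x j = -(A x j)) :
    ∀ x ∈ Ω,
      (∀ i j : Fin m,
        covDeriv g τ i j x = κ x * g x i j + α x i * τ x j + τ x i * β x j) ∧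
      (∑ i, ∑ j, (g x)⁻¹ i j * α x i * τ x j = 0) ∧
      (∑ i, ∑ j, (g x)⁻¹ i j * β x i * τ x j = 0) := by
  obtain ⟨hgsm, hgsymm, hgdet⟩ := hg
  intro x hx
  have hmem : Ω ∈ nhds x := hΩ.mem_nhds hx
  have dg : ∀ a b, DifferentiableAt ℝ (fun y => g y a b) x :=
    fun a b => ((hgsm a b).contDiffAt hmem).differentiableAt (by simp)
  have du : ∀ j, DifferentiableAt ℝ (fun y => u y j) x :=
    fun j => ((hu j).contDiffAt hmem).differentiableAt (by simp)
  have dS : DifferentiableAt ℝ S x := (hS.contDiffAt hmem).differentiableAt (by simp)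
  have hdetne : (g x).det ≠ 0 := (hgdet x hx).ne_zero
  have dginv : ∀ a b, DifferentiableAt ℝ (fun y => (g y)⁻¹ a b) x :=
    diffAt_inv_entry dg hdetne
  have hSne : S x ≠ 0 := (hSpos x hx).ne'
  have hsym : ∀ a b, (g x)⁻¹ a b = (g x)⁻¹ b a := inv_symm (hgsymm x hx)
  have hGGi : ∀ a b, ∑ c, g x a c * (g x)⁻¹ c b = if a = b then (1:ℝ) else 0 := by
    intro a b
    have h2 := congrFun (congrFun (Matrix.mul_nonsing_inv (g x) (hgdet x hx)) a) b
    simpa [Matrix.mul_apply, Matrix.one_apply] using h2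
  -- the vector with raised index
  obtain ⟨up, hupd⟩ : ∃ up : Fin m → ℝ, ∀ l, up l = ∑ k, (g x)⁻¹ l k * u x k :=
    ⟨_, fun l => rfl⟩
  have hup2 : ∀ c, ∑ i, (g x)⁻¹ i c * u x i = up c := by
    intro c
    rw [hupd c]
    exact Finset.sum_congr rfl fun i _ => by rw [hsym i c]
  -- derivative of the inverse metric
  have hDinvG : ∀ (p a b : Fin m),
      ∑ c, (pd p (fun y => (g y)⁻¹ a c) x * g x c b
        + (g x)⁻¹ a c * pd p (fun y => g y c b) x) = 0 := by
    intro p a b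
    have hev : (fun y => ∑ c, (g y)⁻¹ a c * g y c b) =ᶠ[nhds x]
        (fun _ => if a = b then (1:ℝ) else 0) := by
      filter_upwards [hmem] with y hy
      have h2 := congrFun (congrFun (Matrix.nonsing_inv_mul (g y) (hgdet y hy)) a) b
      simpa [Matrix.mul_apply, Matrix.one_apply] using h2
    have h0 : pd p (fun y => ∑ c, (g y)⁻¹ a c * g y c b) x = 0 := by
      rw [pd_congr hev, pd_const]
    rw [pd_sum p Finset.univ (fun c y => (g y)⁻¹ a c * g y c b)
        (fun c _ => (dginv a c).mul (dg c b))] at h0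
    rw [← h0]
    exact Finset.sum_congr rfl fun c _ => (pd_mul p (dginv a c) (dg c b)).symm
  have hDginv : ∀ (p a b : Fin m), pd p (fun y => (g y)⁻¹ a b) x
      = -∑ c, ∑ d, (g x)⁻¹ a c * pd p (fun y => g y c d) x * (g x)⁻¹ d b := by
    intro p a b
    have key : ∀ d, ∑ c, pd p (fun y => (g y)⁻¹ a c) x * g x c d
        = -(∑ c, (g x)⁻¹ a c * pd p (fun y => g y c d) x) := by
      intro d
      have h := hDinvG p a d
      rw [Finset.sum_add_distrib] at h
      linarith
    calc pd p (fun y => (g y)⁻¹ a b) x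
        = ∑ c, pd p (fun y => (g y)⁻¹ a c) x * (if c = b then (1:ℝ) else 0) := by simp
      _ = ∑ c, pd p (fun y => (g y)⁻¹ a c) x * (∑ d, g x c d * (g x)⁻¹ d b) := by
          exact Finset.sum_congr rfl fun c _ => by rw [hGGi c b]
      _ = ∑ c, ∑ d, pd p (fun y => (g y)⁻¹ a c) x * g x c d * (g x)⁻¹ d b := by
          exact Finset.sum_congr rfl fun c _ => by
            rw [Finset.mul_sum]
            exact Finset.sum_congr rfl fun d _ => by ring
      _ = ∑ d, (∑ c, pd p (fun y => (g y)⁻¹ a c) x * g x c d) * (g x)⁻¹ d b := by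
          rw [Finset.sum_comm]
          exact Finset.sum_congr rfl fun d _ => by rw [Finset.sum_mul]
      _ = ∑ d, (-(∑ c, (g x)⁻¹ a c * pd p (fun y => g y c d) x)) * (g x)⁻¹ d b := by
          exact Finset.sum_congr rfl fun d _ => by rw [key d]
      _ = ∑ d, -(∑ c, (g x)⁻¹ a c * pd p (fun y => g y c d) x * (g x)⁻¹ d b) := by
          refine Finset.sum_congr rfl fun d _ => ?_
          rw [neg_mul, Finset.sum_mul]
      _ = -∑ d, ∑ c, (g x)⁻¹ a c * pd p (fun y => g y c d) x * (g x)⁻¹ d b := by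
          rw [Finset.sum_neg_distrib]
      _ = -∑ c, ∑ d, (g x)⁻¹ a c * pd p (fun y => g y c d) x * (g x)⁻¹ d b := by
          rw [Finset.sum_comm]
  -- differentiating the unit-norm condition
  have hF1 : ∀ p : Fin m, ∑ j, up j * pd p (fun y => u y j) x
      = (1/2) * ∑ a, ∑ b, up a * up b * pd p (fun y => g y a b) x := by
    intro p
    have hev : (fun y => ∑ i, ∑ j, (g y)⁻¹ i j * u y i * u y j) =ᶠ[nhds x]
        (fun _ => (-1 : ℝ)) := by
      filter_upwards [hmem] with y hy
      exact hunit y hy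
    have h0 : pd p (fun y => ∑ i, ∑ j, (g y)⁻¹ i j * u y i * u y j) x = 0 := by
      rw [pd_congr hev, pd_const]
    have hexp : pd p (fun y => ∑ i, ∑ j, (g y)⁻¹ i j * u y i * u y j) x
        = ∑ i, ∑ j, (pd p (fun y => (g y)⁻¹ i j) x * u x i * u x j
            + (g x)⁻¹ i j * pd p (fun y => u y i) x * u x j
            + (g x)⁻¹ i j * u x i * pd p (fun y => u y j) x) := by
      rw [pd_sum p Finset.univ (fun i y => ∑ j, (g y)⁻¹ i j * u y i * u y j)
        (fun i _ => DifferentiableAt.fun_sum fun j _ => ((dginv i j).mul (du i)).mul (du j))]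
      refine Finset.sum_congr rfl fun i _ => ?_
      rw [pd_sum p Finset.univ (fun j y => (g y)⁻¹ i j * u y i * u y j)
        (fun j _ => ((dginv i j).mul (du i)).mul (du j))]
      exact Finset.sum_congr rfl fun j _ => pd_mul3 p (dginv i j) (du i) (du j)
    rw [hexp] at h0
    have hsplit : ∑ i, ∑ j, (pd p (fun y => (g y)⁻¹ i j) x * u x i * u x j
            + (g x)⁻¹ i j * pd p (fun y => u y i) x * u x j
            + (g x)⁻¹ i j * u x i * pd p (fun y => u y j) x)
        = (∑ i, ∑ j, pd p (fun y => (g y)⁻¹ i j) x * u x i * u x j)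
          + (∑ i, ∑ j, (g x)⁻¹ i j * pd p (fun y => u y i) x * u x j)
          + (∑ i, ∑ j, (g x)⁻¹ i j * u x i * pd p (fun y => u y j) x) := by
      simp only [Finset.sum_add_distrib]
    rw [hsplit] at h0
    have hT2 : ∑ i, ∑ j, (g x)⁻¹ i j * pd p (fun y => u y i) x * u x j
        = ∑ i, up i * pd p (fun y => u y i) x := by
      refine Finset.sum_congr rfl fun i _ => ?_
      rw [hupd i, Finset.sum_mul]
      exact Finset.sum_congr rfl fun j _ => by ring
    have hT3 : ∑ i, ∑ j, (g x)⁻¹ i j * u x i * pd p (fun y => u y j) x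
        = ∑ j, up j * pd p (fun y => u y j) x := by
      rw [Finset.sum_comm]
      refine Finset.sum_congr rfl fun j _ => ?_
      rw [← hup2 j, Finset.sum_mul]
    have hT1 : ∑ i, ∑ j, pd p (fun y => (g y)⁻¹ i j) x * u x i * u x j
        = -∑ c, ∑ d, up c * up d * pd p (fun y => g y c d) x := by
      calc ∑ i, ∑ j, pd p (fun y => (g y)⁻¹ i j) x * u x i * u x j
          = ∑ i, ∑ j, -((∑ c, ∑ d, (g x)⁻¹ i c * pd p (fun y => g y c d) x * (g x)⁻¹ d j)
              * u x i * u x j) := by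
            refine Finset.sum_congr rfl fun i _ => Finset.sum_congr rfl fun j _ => ?_
            rw [hDginv p i j]
            ring
        _ = -∑ i, ∑ j, (∑ c, ∑ d, (g x)⁻¹ i c * pd p (fun y => g y c d) x * (g x)⁻¹ d j)
              * u x i * u x j := by
            simp only [Finset.sum_neg_distrib]
        _ = -∑ c, ∑ d, (∑ i, (g x)⁻¹ i c * u x i) * pd p (fun y => g y c d) x
              * (∑ j, (g x)⁻¹ d j * u x j) := by
            rw [sum_contract (g x)⁻¹ (u x) (u x) (fun c d => pd p (fun y => g y c d) x)]
        _ = -∑ c, ∑ d, up c * up d * pd p (fun y => g y c d) x := by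
            refine congrArg Neg.neg
              (Finset.sum_congr rfl fun c _ => Finset.sum_congr rfl fun d _ => ?_)
            rw [hup2 c, ← hupd d]
            ring
    rw [hT1, hT2, hT3] at h0
    linarith
  -- contraction of the Christoffel symbols with u
  have hChr : ∀ p i : Fin m, ∑ k, Christoffel g k p i x * u x k
      = (1/2) * ∑ l, up l * (pd p (fun y => g y l i) x + pd i (fun y => g y l p) x
          - pd l (fun y => g y p i) x) := by
    intro p i
    unfold Christoffel
    calc ∑ k, ((1/2) * ∑ l, (g x)⁻¹ k l * (pd p (fun y => g y l i) x
            + pd i (fun y => g y l p) x - pd l (fun y => g y p i) x)) * u x k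
        = ∑ k, ∑ l, (1/2) * ((g x)⁻¹ k l * u x k * (pd p (fun y => g y l i) x
            + pd i (fun y => g y l p) x - pd l (fun y => g y p i) x)) := by
          refine Finset.sum_congr rfl fun k _ => ?_
          rw [Finset.mul_sum, Finset.sum_mul]
          exact Finset.sum_congr rfl fun l _ => by ring
      _ = ∑ l, ∑ k, (1/2) * ((g x)⁻¹ k l * u x k * (pd p (fun y => g y l i) x
            + pd i (fun y => g y l p) x - pd l (fun y => g y p i) x)) := Finset.sum_comm
      _ = ∑ l, (1/2) * (up l * (pd p (fun y => g y l i) x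
            + pd i (fun y => g y l p) x - pd l (fun y => g y p i) x)) := by
          refine Finset.sum_congr rfl fun l _ => ?_
          rw [← Finset.mul_sum]
          congr 1
          rw [← hup2 l, Finset.sum_mul]
      _ = (1/2) * ∑ l, up l * (pd p (fun y => g y l i) x
            + pd i (fun y => g y l p) x - pd l (fun y => g y p i) x) := by
          rw [Finset.mul_sum]
  -- the acceleration is orthogonal to u
  have hkey : ∑ i, A x i * up i = 0 := by
    have hAup : ∀ i, A x i = ∑ p, up p * covDeriv g u p i x := by
      intro i
      rw [hA x i]
      refine Finset.sum_congr rfl fun p _ => ?_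
      rw [hupd p, Finset.sum_mul]
    have h1 : ∑ p, ∑ i, up p * up i * pd p (fun y => u y i) x
        = (1/2) * ∑ p, ∑ a, ∑ b, up p * up a * up b * pd p (fun y => g y a b) x := by
      rw [Finset.mul_sum]
      refine Finset.sum_congr rfl fun p _ => ?_
      calc ∑ i, up p * up i * pd p (fun y => u y i) x
          = up p * ∑ i, up i * pd p (fun y => u y i) x := by
            rw [Finset.mul_sum]
            exact Finset.sum_congr rfl fun i _ => by ring
        _ = up p * ((1/2) * ∑ a, ∑ b, up a * up b * pd p (fun y => g y a b) x) := by
            rw [hF1 p]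
        _ = (1/2) * ∑ a, ∑ b, up p * up a * up b * pd p (fun y => g y a b) x := by
            rw [mul_left_comm]
            congr 1
            rw [Finset.mul_sum]
            refine Finset.sum_congr rfl fun a _ => ?_
            rw [Finset.mul_sum]
            exact Finset.sum_congr rfl fun b _ => by ring
    have h2 : ∑ p, ∑ i, up p * up i * (∑ k, Christoffel g k p i x * u x k)
        = (1/2) * ∑ p, ∑ a, ∑ b, up p * up a * up b * pd p (fun y => g y a b) x := by
      have hT2' : ∑ p, ∑ i, ∑ l, up p * up i * up l * pd i (fun y => g y l p) x
          = ∑ p, ∑ i, ∑ l, up p * up i * up l * pd p (fun y => g y l i) x := by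
        rw [Finset.sum_comm]
        exact Finset.sum_congr rfl fun a _ => Finset.sum_congr rfl fun b _ =>
          Finset.sum_congr rfl fun l _ => by ring
      have hT3' : ∑ p, ∑ i, ∑ l, up p * up i * up l * pd l (fun y => g y p i) x
          = ∑ p, ∑ i, ∑ l, up p * up i * up l * pd p (fun y => g y l i) x := by
        calc ∑ p, ∑ i, ∑ l, up p * up i * up l * pd l (fun y => g y p i) x
            = ∑ p, ∑ l, ∑ i, up p * up i * up l * pd l (fun y => g y p i) x :=
              Finset.sum_congr rfl fun p _ => Finset.sum_comm
          _ = ∑ l, ∑ p, ∑ i, up p * up i * up l * pd l (fun y => g y p i) x :=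
              Finset.sum_comm
          _ = ∑ l, ∑ i, ∑ p, up p * up i * up l * pd l (fun y => g y p i) x :=
              Finset.sum_congr rfl fun l _ => Finset.sum_comm
          _ = ∑ p, ∑ i, ∑ l, up p * up i * up l * pd p (fun y => g y l i) x :=
            Finset.sum_congr rfl fun a _ => Finset.sum_congr rfl fun b _ =>
              Finset.sum_congr rfl fun c _ => by ring
      calc ∑ p, ∑ i, up p * up i * (∑ k, Christoffel g k p i x * u x k)
          = ∑ p, ∑ i, (1/2) * ∑ l, (up p * up i * up l * pd p (fun y => g y l i) x
              + up p * up i * up l * pd i (fun y => g y l p) x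
              - up p * up i * up l * pd l (fun y => g y p i) x) := by
            refine Finset.sum_congr rfl fun p _ => Finset.sum_congr rfl fun i _ => ?_
            rw [hChr p i, mul_left_comm]
            congr 1
            rw [Finset.mul_sum]
            exact Finset.sum_congr rfl fun l _ => by ring
        _ = (1/2) * ∑ p, ∑ i, ∑ l, (up p * up i * up l * pd p (fun y => g y l i) x
              + up p * up i * up l * pd i (fun y => g y l p) x
              - up p * up i * up l * pd l (fun y => g y p i) x) := by
            rw [Finset.mul_sum]
            exact Finset.sum_congr rfl fun p _ => by rw [Finset.mul_sum]
        _ = (1/2) * ((∑ p, ∑ i, ∑ l, up p * up i * up l * pd p (fun y => g y l i) x)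
              + (∑ p, ∑ i, ∑ l, up p * up i * up l * pd i (fun y => g y l p) x)
              - (∑ p, ∑ i, ∑ l, up p * up i * up l * pd l (fun y => g y p i) x)) := by
            congr 1
            simp only [Finset.sum_add_distrib, Finset.sum_sub_distrib]
        _ = (1/2) * ∑ p, ∑ i, ∑ l, up p * up i * up l * pd p (fun y => g y l i) x := by
            rw [hT2', hT3']
            ring
        _ = (1/2) * ∑ p, ∑ a, ∑ b, up p * up a * up b * pd p (fun y => g y a b) x := by
            congr 1
            exact Finset.sum_congr rfl fun p _ =>
              Finset.sum_comm.trans (Finset.sum_congr rfl fun a _ =>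
                Finset.sum_congr rfl fun b _ => by ring)
    calc ∑ i, A x i * up i
        = ∑ i, ∑ p, up p * up i * covDeriv g u p i x := by
          refine Finset.sum_congr rfl fun i _ => ?_
          rw [hAup i, Finset.sum_mul]
          exact Finset.sum_congr rfl fun p _ => by ring
      _ = ∑ p, ∑ i, up p * up i * covDeriv g u p i x := Finset.sum_comm
      _ = ∑ p, ∑ i, (up p * up i * pd p (fun y => u y i) x
            - up p * up i * (∑ k, Christoffel g k p i x * u x k)) := by
          refine Finset.sum_congr rfl fun p _ => Finset.sum_congr rfl fun i _ => ?_
          unfold covDeriv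
          ring
      _ = (∑ p, ∑ i, up p * up i * pd p (fun y => u y i) x)
          - ∑ p, ∑ i, up p * up i * (∑ k, Christoffel g k p i x * u x k) := by
          simp only [Finset.sum_sub_distrib]
      _ = 0 := by rw [h1, h2, sub_self]
  refine ⟨fun i j => ?_, ?_, ?_⟩
  · -- the covariant derivative identity
    have h1 : (fun y => τ y j) = fun y => S y * u y j := funext fun y => hτ y j
    have hcov : covDeriv g τ i j x = pd i S x * u x j + S x * covDeriv g u i j x := by
      unfold covDeriv
      rw [h1, pd_mul i dS (du j)]
      have h2 : ∑ k, Christoffel g k i j x * τ x k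
          = S x * ∑ k, Christoffel g k i j x * u x k := by
        rw [Finset.mul_sum]
        exact Finset.sum_congr rfl fun k _ => by rw [hτ x k]; ring
      rw [h2]
      ring
    rw [hcov, hueq x hx i j, hκ x, hα x i, hβ x j, hτ x j, hτ x i]
    field_simp
    ring
  · -- α is orthogonal to τ
    have hSwap : ∑ i, ∑ j, (g x)⁻¹ i j * pd i S x * u x j = φ x * S x := by
      rw [← hSeq x hx, Finset.sum_comm]
      exact Finset.sum_congr rfl fun a _ => Finset.sum_congr rfl fun b _ => by
        rw [hsym b a]; ring
    calc ∑ i, ∑ j, (g x)⁻¹ i j * α x i * τ x j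
        = ∑ i, ∑ j, ((g x)⁻¹ i j * pd i S x * u x j
            + φ x * S x * ((g x)⁻¹ i j * u x i * u x j)) := by
          refine Finset.sum_congr rfl fun i _ => Finset.sum_congr rfl fun j _ => ?_
          rw [hα x i, hτ x j]
          field_simp
      _ = (∑ i, ∑ j, (g x)⁻¹ i j * pd i S x * u x j)
          + φ x * S x * ∑ i, ∑ j, (g x)⁻¹ i j * u x i * u x j := by
          simp only [Finset.sum_add_distrib, Finset.mul_sum]
      _ = φ x * S x + φ x * S x * (-1) := by rw [hSwap, hunit x hx]
      _ = 0 := by ring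
  · -- β is orthogonal to τ
    calc ∑ i, ∑ j, (g x)⁻¹ i j * β x i * τ x j
        = ∑ i, (-(S x)) * (A x i * up i) := by
          refine Finset.sum_congr rfl fun i _ => ?_
          rw [hupd i, Finset.mul_sum, Finset.mul_sum]
          refine Finset.sum_congr rfl fun j _ => ?_
          rw [hβ x i, hτ x j]
          ring
      _ = (-(S x)) * ∑ i, A x i * up i := by rw [Finset.mul_sum]
      _ = 0 := by rw [hkey]; ring
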